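/- arXiv:1402.6278 — 3 statements merged into one kernel-verified Lean document; each statement's English description precedes it below -/
import Mathlib

section
/- Let p be a prime and consider the concept class Line_p of indicator functions of affine lines {(x,y) ∈ ZZ_p² : a·x + b = y} for (a,b) ∈ ZZ_p². The Littlestone dimension of Line_p equals 2. -/
open Finset

/-- `C` admits a complete mistake tree of depth `d`: there is a labeling of the
internal nodes (indexed by binary strings of length `< d`) by points such that every
root-to-leaf bit string `ε` is realized by some concept in `C`. -/
def LShatters {X : Type*} (C : Set (X → Bool)) (d : ℕ) : Prop :=
  ∃ T : List Bool → X, ∀ ε : Fin d → Bool, ∃ c ∈ C,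
    ∀ i : Fin d, c (T ((List.ofFn ε).take i)) = ε i

/-- the Littlestone dimension of the class of lines in `ZMod p × ZMod p`
equals 2. -/
theorem stmt_1 (p : ℕ) [Fact p.Prime]
    (Line : Set (ZMod p × ZMod p → Bool))
    (hLine : Line = {f | ∃ a b : ZMod p, f = fun P => decide (a * P.1 + b = P.2)}) :
    LShatters Line 2 ∧ ¬ LShatters Line 3 := by
  subst hLine
  constructor
  · refine ⟨fun l => if l.isEmpty then ((0 : ZMod p), (0 : ZMod p)) else (1, 0), fun ε => ?_⟩
    rcases Bool.dichotomy (ε 0) with h0 | h0 <;> rcases Bool.dichotomy (ε 1) with h1 | h1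
    · exact ⟨_, ⟨0, 1, rfl⟩, by
        intro i
        fin_cases i <;> simp [h0, h1, List.ofFn_succ, one_ne_zero]⟩
    · exact ⟨_, ⟨-1, 1, rfl⟩, by
        intro i
        fin_cases i <;> simp [h0, h1, List.ofFn_succ, one_ne_zero]⟩
    · exact ⟨_, ⟨1, 0, rfl⟩, by
        intro i
        fin_cases i <;> simp [h0, h1, List.ofFn_succ, one_ne_zero]⟩
    · exact ⟨_, ⟨0, 0, rfl⟩, by
        intro i
        fin_cases i <;> simp [h0, h1, List.ofFn_succ]⟩
  · rintro ⟨T, h⟩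
    obtain ⟨c1, ⟨a1, b1, rfl⟩, hc1⟩ := h ![true, true, true]
    obtain ⟨c2, ⟨a2, b2, rfl⟩, hc2⟩ := h ![true, true, false]
    obtain ⟨c3, ⟨a3, b3, rfl⟩, hc3⟩ := h ![true, false, true]
    have e10 := hc1 0; have e11 := hc1 1; have e12 := hc1 2
    have e20 := hc2 0; have e21 := hc2 1; have e22 := hc2 2
    have e30 := hc3 0; have e31 := hc3 1
    simp [List.ofFn_succ] at e10 e11 e12 e20 e21 e22 e30 e31
    set x0 := T [] with hx0
    set x1 := T [true] with hx1
    set x2 := T [true, true] with hx2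
    -- lines c1 and c2 both pass through x0 and x1 but differ at x2, hence x0 = x1
    have ha : a1 ≠ a2 := by
      intro hne
      subst hne
      have : b1 = b2 := by linear_combination e10 - e20
      subst this
      exact e22 e12
    have hx01 : x0.1 = x1.1 := by
      have k0 : (a1 - a2) * x0.1 = b2 - b1 := by linear_combination e10 - e20
      have k1 : (a1 - a2) * x1.1 = b2 - b1 := by linear_combination e11 - e21
      exact mul_left_cancel₀ (sub_ne_zero.mpr ha) (k0.trans k1.symm)
    have hx02 : x0 = x1 := by
      ext
      · exact hx01
      · rw [← e10, ← e11, hx01]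
    rw [hx02] at e30
    exact e31 e30
end

section
/- Let f be a halfspace over I_b^d, i.e., f(x) = 1 iff w'·x ≥ θ' for some integer vector w' ∈ ZZ^d and integer θ', restricted to x ∈ I_b^d where I_b = {0,…,2^b−1}. Then there exist w ∈ ZZ^d and θ ∈ ZZ such that (w, θ) also represents f (f(x) = 1 iff w·x ≥ θ for all x ∈ I_b^d) and for every two distinct points x, x' ∈ I_b^d, w·x ≠ w·x'. -/
open Finset

/-- every halfspace over the grid `I_b^d` has a collision-free integer
representation. -/
theorem stmt_4 (b d : ℕ) (w' : Fin d → ℤ) (θ' : ℤ) :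
    ∃ (w : Fin d → ℤ) (θ : ℤ),
      (∀ x : Fin d → Fin (2 ^ b),
        (θ ≤ ∑ i, w i * ((x i : ℕ) : ℤ) ↔ θ' ≤ ∑ i, w' i * ((x i : ℕ) : ℤ))) ∧
      ∀ x x' : Fin d → Fin (2 ^ b), x ≠ x' →
        (∑ i, w i * ((x i : ℕ) : ℤ)) ≠ ∑ i, w i * ((x' i : ℕ) : ℤ) := by
  set N : ℤ := 2 ^ b with hN
  have hN1 : (1 : ℤ) ≤ N := one_le_pow₀ (by norm_num)
  set M : ℤ := (∑ i : Fin d, (N - 1) * N ^ (i : ℕ)) + 1 with hM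
  have hMpos : 0 < M := by
    have : 0 ≤ ∑ i : Fin d, (N - 1) * N ^ (i : ℕ) :=
      Finset.sum_nonneg fun i _ => mul_nonneg (by linarith) (pow_nonneg (by linarith) _)
    linarith
  have hP0 : ∀ x : Fin d → Fin (2 ^ b),
      0 ≤ ∑ i : Fin d, N ^ (i : ℕ) * ((x i : ℕ) : ℤ) := fun x =>
    Finset.sum_nonneg fun i _ => mul_nonneg (pow_nonneg (by linarith) _) (by positivity)
  have hPlt : ∀ x : Fin d → Fin (2 ^ b),
      (∑ i : Fin d, N ^ (i : ℕ) * ((x i : ℕ) : ℤ)) < M := by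
    intro x
    have : (∑ i : Fin d, N ^ (i : ℕ) * ((x i : ℕ) : ℤ)) ≤
        ∑ i : Fin d, (N - 1) * N ^ (i : ℕ) := by
      apply Finset.sum_le_sum
      intro i _
      have hxi : ((x i : ℕ) : ℤ) ≤ N - 1 := by
        have := (x i).isLt
        have : ((x i : ℕ) : ℤ) < (2 ^ b : ℕ) := by exact_mod_cast this
        push_cast at this
        rw [hN]; linarith
      calc N ^ (i : ℕ) * ((x i : ℕ) : ℤ) ≤ N ^ (i : ℕ) * (N - 1) :=
            mul_le_mul_of_nonneg_left hxi (pow_nonneg (by linarith) _)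
        _ = (N - 1) * N ^ (i : ℕ) := mul_comm _ _
    linarith
  have hsplit : ∀ x : Fin d → Fin (2 ^ b),
      (∑ i, (M * w' i + N ^ (i : ℕ)) * ((x i : ℕ) : ℤ)) =
        M * (∑ i, w' i * ((x i : ℕ) : ℤ)) + ∑ i : Fin d, N ^ (i : ℕ) * ((x i : ℕ) : ℤ) := by
    intro x
    rw [Finset.mul_sum, ← Finset.sum_add_distrib]
    apply Finset.sum_congr rfl
    intro i _
    ring
  refine ⟨fun i => M * w' i + N ^ (i : ℕ), M * θ', ?_, ?_⟩
  · intro x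
    rw [hsplit x]
    set S := ∑ i, w' i * ((x i : ℕ) : ℤ)
    constructor
    · intro h
      by_contra hc
      push_neg at hc
      have hS : S ≤ θ' - 1 := by linarith
      have : M * S + ∑ i : Fin d, N ^ (i : ℕ) * ((x i : ℕ) : ℤ) < M * θ' := by
        have h1 : M * S ≤ M * (θ' - 1) := mul_le_mul_of_nonneg_left hS hMpos.le
        have := hPlt x
        nlinarith
      linarith
    · intro h
      have h1 : M * θ' ≤ M * S := mul_le_mul_of_nonneg_left h hMpos.le
      have := hP0 x
      linarith
  · intro x x' hne heq
    rw [hsplit x, hsplit x'] at heq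
    set Px := ∑ i : Fin d, N ^ (i : ℕ) * ((x i : ℕ) : ℤ) with hPx
    set Px' := ∑ i : Fin d, N ^ (i : ℕ) * ((x' i : ℕ) : ℤ) with hPx'
    have hPeq : Px = Px' := by
      have hdvd : M ∣ (Px - Px') := ⟨(∑ i, w' i * ((x' i : ℕ) : ℤ)) - (∑ i, w' i * ((x i : ℕ) : ℤ)), by linarith⟩
      have habs : |Px - Px'| < M := by
        have := hP0 x; have := hP0 x'; have := hPlt x; have := hPlt x'
        rw [abs_lt]; constructor <;> linarith
      have := Int.eq_zero_of_abs_lt_dvd hdvd habs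
      linarith
    -- conclude x = x' via base-N digits
    have hnat : (∑ i : Fin d, (x i : ℕ) * (2 ^ b) ^ (i : ℕ)) =
        ∑ i : Fin d, (x' i : ℕ) * (2 ^ b) ^ (i : ℕ) := by
      have : ((∑ i : Fin d, (x i : ℕ) * (2 ^ b) ^ (i : ℕ) : ℕ) : ℤ) =
          ((∑ i : Fin d, (x' i : ℕ) * (2 ^ b) ^ (i : ℕ) : ℕ) : ℤ) := by
        push_cast
        rw [hN] at hPx hPx'
        calc (∑ i : Fin d, ((x i : ℕ) : ℤ) * ((2:ℤ) ^ b) ^ (i : ℕ))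
            = Px := by rw [hPx]; exact Finset.sum_congr rfl fun i _ => mul_comm _ _
          _ = Px' := hPeq
          _ = _ := by rw [hPx']; exact Finset.sum_congr rfl fun i _ => mul_comm _ _
      exact_mod_cast this
    apply hne
    have := finFunctionFinEquiv_apply (n := 2 ^ b) (m := d)
    have hval : (finFunctionFinEquiv x : ℕ) = (finFunctionFinEquiv x' : ℕ) := by
      rw [finFunctionFinEquiv_apply, finFunctionFinEquiv_apply]
      exact hnat
    exact finFunctionFinEquiv.injective (Fin.val_injective hval)
end

section
/- Let m, γ, p satisfy the following setup: (a₁,b₁), (a₂,b₂) are i.i.d. samples from a distribution over ZZ_p² satisfying Pr[(a₁,b₁) = (a₂,b₂)] ≤ γ/p (equivalently the distribution has collision probability at most γ/p), and for i = 1,2, (x_i, y_i) is a uniformly random point on the line determined by (a_i, b_i), sampled independently. Then Pr[(x₁,y₁) = (x₂,y₂)] ≤ (1+γ)/p², and consequently the Rényi (collision) entropy of (x,y) satisfies H₂(x,y) ≥ 2 log₂ p − log₂(1+γ) ≥ 2 log₂ p − γ/ln 2. -/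
open Finset

/-- if the line parameters `(a,b)` have collision probability at most
`γ/p`, then a uniform point on the random line has collision probability at most
`(1+γ)/p²`, hence collision (Rényi) entropy at least `2 log₂ p − log₂(1+γ)
≥ 2 log₂ p − γ/ln 2`. -/
theorem stmt_7 (p : ℕ) [Fact p.Prime] (γ : ℝ) (hγ : 0 ≤ γ)
    (μ : ZMod p × ZMod p → ℝ) (hnn : ∀ ab, 0 ≤ μ ab) (hsum : ∑ ab, μ ab = 1)
    (hcol : ∑ ab, μ ab ^ 2 ≤ γ / p)
    (ν : ZMod p × ZMod p → ℝ)
    (hν : ∀ P, ν P = ∑ ab : ZMod p × ZMod p,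
        μ ab * (if ab.1 * P.1 + ab.2 = P.2 then (1 : ℝ) / p else 0)) :
    (∑ P, ν P ^ 2 ≤ (1 + γ) / (p : ℝ) ^ 2) ∧
    (2 * Real.logb 2 p - Real.logb 2 (1 + γ) ≤ -Real.logb 2 (∑ P, ν P ^ 2)) ∧
    (2 * Real.logb 2 p - γ / Real.log 2 ≤ 2 * Real.logb 2 p - Real.logb 2 (1 + γ)) := by
  have hp : p.Prime := Fact.out
  have hp0 : (0:ℝ) < p := by exact_mod_cast hp.pos
  have hcard : Fintype.card (ZMod p) = p := ZMod.card p
  set f : ZMod p × ZMod p → ZMod p × ZMod p → ℝ :=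
    fun ab P => if ab.1 * P.1 + ab.2 = P.2 then (1:ℝ)/p else 0 with hf
  -- inner-sum bound
  have hT : ∀ ab cd : ZMod p × ZMod p,
      ∑ P, f ab P * f cd P ≤ 1/(p:ℝ)^2 + (if ab = cd then 1/(p:ℝ) else 0) := by
    intro ab cd
    have h1 : ∀ P : ZMod p × ZMod p, f ab P * f cd P =
        if (ab.1 * P.1 + ab.2 = P.2 ∧ cd.1 * P.1 + cd.2 = P.2) then 1/(p:ℝ)^2 else 0 := by
      intro P
      by_cases hA : ab.1 * P.1 + ab.2 = P.2 <;> by_cases hB : cd.1 * P.1 + cd.2 = P.2 <;>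
        simp only [hf, hA, hB, if_true, if_false, mul_zero, zero_mul, and_true, and_false,
          false_and, true_and, if_pos, if_neg, not_false_iff] <;>
      first
        | ring
        | (rw [if_pos ⟨hA, hB⟩]; ring)
        | (rw [if_neg (by tauto)])
        | rfl
    simp_rw [h1]
    rw [Finset.sum_ite, Finset.sum_const, Finset.sum_const_zero, add_zero, nsmul_eq_mul]
    by_cases h : ab = cd
    · subst h
      have hcardle : (Finset.filter
          (fun P : ZMod p × ZMod p => ab.1 * P.1 + ab.2 = P.2 ∧ ab.1 * P.1 + ab.2 = P.2)
          Finset.univ).card ≤ p := by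
        have h2 : (Finset.filter
            (fun P : ZMod p × ZMod p => ab.1 * P.1 + ab.2 = P.2 ∧ ab.1 * P.1 + ab.2 = P.2)
            Finset.univ).card ≤ (Finset.univ : Finset (ZMod p)).card := by
          apply Finset.card_le_card_of_injOn (fun P => P.1)
          · intro P _; exact Finset.mem_univ _
          · intro P hP Q hQ hPQ
            simp only [Finset.mem_coe, Finset.mem_filter] at hP hQ
            simp only at hPQ
            have : P.2 = Q.2 := by rw [← hP.2.1, ← hQ.2.1, hPQ]
            exact Prod.ext hPQ this
        exact h2.trans_eq (by rw [Finset.card_univ, hcard])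
      simp only [if_pos rfl]
      have hm : ((Finset.filter
          (fun P : ZMod p × ZMod p => ab.1 * P.1 + ab.2 = P.2 ∧ ab.1 * P.1 + ab.2 = P.2)
          Finset.univ).card : ℝ) * (1/(p:ℝ)^2) ≤ (p:ℝ) * (1/(p:ℝ)^2) := by
        apply mul_le_mul_of_nonneg_right _ (by positivity)
        exact_mod_cast hcardle
      refine le_trans hm ?_
      have he : (p:ℝ) * (1/(p:ℝ)^2) = 1/(p:ℝ) := by field_simp
      rw [he]
      simp only [if_true]
      nlinarith [one_div_pos.mpr (pow_pos hp0 2)]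
    · have hcardle : (Finset.filter
          (fun P : ZMod p × ZMod p => ab.1 * P.1 + ab.2 = P.2 ∧ cd.1 * P.1 + cd.2 = P.2)
          Finset.univ).card ≤ 1 := by
        apply Finset.card_le_one.mpr
        intro P hP Q hQ
        simp only [Finset.mem_coe, Finset.mem_filter] at hP hQ
        have key : ∀ R : ZMod p × ZMod p, ab.1 * R.1 + ab.2 = R.2 → cd.1 * R.1 + cd.2 = R.2 →
            R.1 = (cd.2 - ab.2) / (ab.1 - cd.1) ∨ ab = cd := by
          intro R h1 h2
          by_cases hac : ab.1 = cd.1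
          · right
            have : ab.2 = cd.2 := by
              have := h1.trans h2.symm
              rw [hac] at this
              exact add_left_cancel this
            exact Prod.ext hac this
          · left
            have hne : ab.1 - cd.1 ≠ 0 := sub_ne_zero.mpr hac
            have : (ab.1 - cd.1) * R.1 = cd.2 - ab.2 := by
              have := h1.trans h2.symm
              ring_nf
              ring_nf at this
              linear_combination this
            field_simp
            linear_combination this
        rcases key P hP.2.1 hP.2.2 with h1 | h1
        · rcases key Q hQ.2.1 hQ.2.2 with h2 | h2
          · have hx : P.1 = Q.1 := h1.trans h2.symm
            have : P.2 = Q.2 := by rw [← hP.2.1, ← hQ.2.1, hx]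
            exact Prod.ext hx this
          · exact absurd h2 h
        · exact absurd h1 h
      simp only [if_neg h, add_zero]
      have hm : ((Finset.filter
          (fun P : ZMod p × ZMod p => ab.1 * P.1 + ab.2 = P.2 ∧ cd.1 * P.1 + cd.2 = P.2)
          Finset.univ).card : ℝ) * (1/(p:ℝ)^2) ≤ 1 * (1/(p:ℝ)^2) := by
        apply mul_le_mul_of_nonneg_right _ (by positivity)
        exact_mod_cast hcardle
      linarith [hm]
  -- expand the sum
  have expand : ∑ P, ν P ^ 2 = ∑ ab, ∑ cd, μ ab * μ cd * ∑ P, f ab P * f cd P := by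
    have h1 : ∀ P, ν P ^ 2 = ∑ ab, ∑ cd, μ ab * μ cd * (f ab P * f cd P) := by
      intro P
      rw [hν P, sq, Finset.sum_mul_sum]
      refine Finset.sum_congr rfl fun ab _ => Finset.sum_congr rfl fun cd _ => ?_
      simp only [hf]
      ring
    simp_rw [h1]
    rw [Finset.sum_comm]
    refine Finset.sum_congr rfl fun ab _ => ?_
    rw [Finset.sum_comm]
    refine Finset.sum_congr rfl fun cd _ => ?_
    rw [← Finset.mul_sum]
  -- collision bound
  have hS : ∑ P, ν P ^ 2 ≤ (1 + γ) / (p : ℝ) ^ 2 := by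
    rw [expand]
    have step1 : ∑ ab, ∑ cd, μ ab * μ cd * ∑ P, f ab P * f cd P ≤
        ∑ ab, ∑ cd, μ ab * μ cd * (1/(p:ℝ)^2 + (if ab = cd then 1/(p:ℝ) else 0)) := by
      refine Finset.sum_le_sum fun ab _ => Finset.sum_le_sum fun cd _ => ?_
      exact mul_le_mul_of_nonneg_left (hT ab cd) (mul_nonneg (hnn ab) (hnn cd))
    refine step1.trans ?_
    have step2 : ∑ ab, ∑ cd, μ ab * μ cd * (1/(p:ℝ)^2 + (if ab = cd then 1/(p:ℝ) else 0)) =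
        1/(p:ℝ)^2 + (∑ ab, μ ab ^ 2) * (1/(p:ℝ)) := by
      have : ∀ ab : ZMod p × ZMod p,
          ∑ cd, μ ab * μ cd * (1/(p:ℝ)^2 + (if ab = cd then 1/(p:ℝ) else 0)) =
          μ ab * (1/(p:ℝ)^2) + μ ab ^ 2 * (1/(p:ℝ)) := by
        intro ab
        have e : ∀ cd : ZMod p × ZMod p,
            μ ab * μ cd * (1/(p:ℝ)^2 + (if ab = cd then 1/(p:ℝ) else 0)) =
            μ ab * μ cd * (1/(p:ℝ)^2) + (if ab = cd then μ ab * μ cd * (1/(p:ℝ)) else 0) := by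
          intro cd
          by_cases h : ab = cd <;> simp [h] <;> ring
        simp_rw [e]
        rw [Finset.sum_add_distrib, Finset.sum_ite_eq Finset.univ ab
          (fun cd => μ ab * μ cd * (1/(p:ℝ))), if_pos (Finset.mem_univ ab), ← Finset.sum_mul,
          ← Finset.mul_sum, hsum]
        ring
      simp_rw [this]
      rw [Finset.sum_add_distrib, ← Finset.sum_mul, hsum, ← Finset.sum_mul]
      ring
    rw [step2]
    have : (∑ ab, μ ab ^ 2) * (1/(p:ℝ)) ≤ (γ / p) * (1/(p:ℝ)) :=
      mul_le_mul_of_nonneg_right hcol (by positivity)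
    have he : (γ / (p:ℝ)) * (1/(p:ℝ)) = γ / (p:ℝ)^2 := by rw [div_mul_div_comm, mul_one, sq]
    rw [he] at this
    have : 1/(p:ℝ)^2 + (∑ ab, μ ab ^ 2) * (1/(p:ℝ)) ≤ 1/(p:ℝ)^2 + γ/(p:ℝ)^2 := by linarith
    refine this.trans (le_of_eq ?_)
    ring
  -- positivity of the collision sum
  have hSpos : 0 < ∑ P, ν P ^ 2 := by
    obtain ⟨ab, hab⟩ : ∃ ab, 0 < μ ab := by
      by_contra h
      push_neg at h
      have : ∑ ab, μ ab = 0 :=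
        Finset.sum_eq_zero fun ab _ => le_antisymm (h ab) (hnn ab)
      rw [hsum] at this; norm_num at this
    have hterm : 0 < ν (0, ab.2) := by
      rw [hν]
      have h1 : μ ab * (if ab.1 * (0, ab.2).1 + ab.2 = (0, ab.2).2 then (1:ℝ)/p else 0) =
          μ ab * (1/p) := by norm_num
      calc (0:ℝ) < μ ab * (1/p) := mul_pos hab (by positivity)
        _ = μ ab * (if ab.1 * (0, ab.2).1 + ab.2 = (0, ab.2).2 then (1:ℝ)/p else 0) := h1.symm
        _ ≤ _ := Finset.single_le_sum (f := fun cd => μ cd *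
              (if cd.1 * ((0:ZMod p), ab.2).1 + cd.2 = ((0:ZMod p), ab.2).2 then (1:ℝ)/p else 0))
            (fun cd _ => mul_nonneg (hnn cd) (by positivity)) (Finset.mem_univ ab)
    calc (0:ℝ) < ν (0, ab.2) ^ 2 := pow_pos hterm 2
      _ ≤ ∑ P, ν P ^ 2 :=
        Finset.single_le_sum (f := fun P : ZMod p × ZMod p => ν P ^ 2)
          (fun P _ => sq_nonneg _) (Finset.mem_univ _)
  have h1γ : (0:ℝ) < 1 + γ := by linarith
  have hlog2 : (0:ℝ) < Real.log 2 := Real.log_pos one_lt_two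
  refine ⟨hS, ?_, ?_⟩
  · have hmono : Real.logb 2 (∑ P, ν P ^ 2) ≤ Real.logb 2 ((1 + γ) / (p:ℝ)^2) :=
      Real.logb_le_logb_of_le one_lt_two hSpos hS
    have he : Real.logb 2 ((1 + γ) / (p:ℝ)^2) =
        Real.logb 2 (1 + γ) - 2 * Real.logb 2 p := by
      rw [Real.logb_div h1γ.ne' (by positivity), Real.logb_pow]
      push_cast
      ring
    rw [he] at hmono
    linarith
  · have hloggle : Real.log (1 + γ) ≤ γ := by
      have := Real.log_le_sub_one_of_pos h1γ
      linarith
    have : Real.logb 2 (1 + γ) ≤ γ / Real.log 2 := by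
      rw [Real.logb, div_le_div_iff_of_pos_right hlog2]
      exact hloggle
    linarith
end
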